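/- Let G be a finite group of order n with identity e, and let a, b, c ∈ G, none equal to e, with a b c = e, such that a, b, c are pairwise distinct and a b ≠ب b a. Then the coefficient of the monomial x_e^{n-3} x_a x_b x_c in the group determinant Θ(G) equals n. -/

import Mathlib

/-- The group determinant `Θ(G)` of a finite group `G`, as a multivariate polynomial over a
commutative ring `R` in independent commuting variables `x_g` (`g ∈ G`):
`Θ(G) = det((x_{g h⁻¹})_{g,h ∈ G})`. -/
noncomputable def groupDet (R G : Type*) [CommRing R] [Group G] [Finite G] :
    MvPolynomial G R := by
  classical
  letI := Fintype.ofFinite G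
  exact Matrix.det (Matrix.of fun g h : G => MvPolynomial.X (g * h⁻¹))

/-! The coefficient is the signed number of permutations `σ` of `G` whose Leibniz term
`∏ᵢ x_{σ(i) i⁻¹}` is `x_e^{n-3} x_a x_b x_c`. Such a `σ` moves exactly three points, so it is a
3-cycle `r ↦ σ r ↦ σ² r ↦ r`, of sign `1`, whose displacements `σ(i) i⁻¹` along the cycle are
`c, x, y` with `y x c = 1` and `{x, y} = {a, b}`. Since `b a c ≠ 1 = a b c`, necessarily
`x = b` and `y = a`, i.e. `σ` is the cycle `(r, c r, b c r)`. Conversely each of these `n` cycles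
has the required term, and they are distinct because `r` is the only point displaced by `c`. -/

open MvPolynomial Finset Equiv Equiv.Perm

theorem Equiv.Perm.IsThreeCycle.apply_apply_apply {α : Type*} [Fintype α] [DecidableEq α]
    {σ : Perm α} (hσ : σ.IsThreeCycle) (x : α) : σ (σ (σ x)) = x := by
  have h := pow_orderOf_eq_one σ
  rw [hσ.orderOf] at h
  simpa [pow_succ] using congrArg (· x) h

namespace GroupDet

variable {G : Type*} [Group G]

theorem nodup_threeCycle {b c : G} (hb : b ≠ 1) (hc : c ≠ 1) (hbc : b * c ≠ 1) (r : G) :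
    [r, c * r, b * c * r].Nodup := by
  simp [eq_comm (a := r), hb, hc, hbc]

section

variable [DecidableEq G]

/-- The 3-cycle `r ↦ c r ↦ b c r ↦ r`. -/
def threeCycle (b c r : G) : Perm G :=
  swap r (c * r) * swap (c * r) (b * c * r)

theorem threeCycle_apply_self {b c : G} (hb : b ≠ 1) (hc : c ≠ 1) (hbc : b * c ≠ 1) (r : G) :
    threeCycle b c r r = c * r := by
  have h := nodup_threeCycle hb hc hbc r
  simp only [List.nodup_cons, List.mem_cons, not_or] at h
  rw [threeCycle, mul_apply, swap_apply_of_ne_of_ne h.1.1 h.1.2.1, swap_apply_left]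

theorem threeCycle_apply_mul_self {b c : G} (hb : b ≠ 1) (hc : c ≠ 1) (hbc : b * c ≠ 1)
    (r : G) : threeCycle b c r (c * r) = b * c * r := by
  have h := nodup_threeCycle hb hc hbc r
  simp only [List.nodup_cons, List.mem_cons, not_or] at h
  rw [threeCycle, mul_apply, swap_apply_left, swap_apply_of_ne_of_ne (Ne.symm h.1.2.1)
    (Ne.symm h.2.1.1)]

end

variable [Fintype G]

/-- The exponent of the monomial `∏ᵢ x_{σ(i) i⁻¹}`, the `σ`-term of the Leibniz expansion
of `Θ(G)`. -/
noncomputable def termExponent (σ : Perm G) : G →₀ ℕ :=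
  ∑ i, Finsupp.single (σ i * i⁻¹) 1

variable [DecidableEq G]

theorem groupDet_eq_det (R : Type*) [CommRing R] :
    groupDet R G = (Matrix.of fun g h : G => (X (g * h⁻¹) : MvPolynomial G R)).det := by
  unfold groupDet
  congr!

theorem coeff_groupDet (R : Type*) [CommRing R] (m : G →₀ ℕ) :
    coeff m (groupDet R G) = ∑ σ with termExponent σ = m, ((sign σ : ℤ) : R) := by
  rw [groupDet_eq_det, Matrix.det_apply, coeff_sum, sum_filter]
  refine sum_congr rfl fun σ _ => ?_
  have hterm : ∏ i, (Matrix.of fun g h : G => (X (g * h⁻¹) : MvPolynomial G R)) (σ i) i =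
      monomial (termExponent σ) 1 := by
    simp only [termExponent, monomial_sum_one, Matrix.of_apply, X]
  rw [hterm, Units.smul_def, coeff_smul, coeff_monomial]
  split_ifs <;> simp

theorem termExponent_apply (σ : Perm G) (v : G) :
    termExponent σ v = #{i | σ i * i⁻¹ = v} := by
  simp only [termExponent, Finsupp.finsetSum_apply, Finsupp.single_apply, card_filter]

theorem card_support_eq_card_sub_termExponent_one (σ : Perm G) : #σ.support = Fintype.card G - termExponent σ 1 := by
  have := card_filter_add_card_filter_not (s := univ) (fun i => σ i = i)
  rw [Perm.support, termExponent_apply]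
  simp only [mul_inv_eq_one, card_univ, ne_eq] at *
  omega

theorem exists_mul_inv_eq_of_termExponent_ne_zero {σ : Perm G} {v : G}
    (h : termExponent σ v ≠ 0) : ∃ i, σ i * i⁻¹ = v := by
  simpa [termExponent_apply, Finset.card_eq_zero, filter_eq_empty_iff] using h

theorem eq_of_termExponent_eq_one {σ : Perm G} {v x y : G} (h : termExponent σ v = 1)
    (hx : σ x * x⁻¹ = v) (hy : σ y * y⁻¹ = v) : x = y := by
  rw [termExponent_apply] at h
  exact card_le_one.mp h.le x (by simpa using hx) y (by simpa using hy)

theorem termExponent_eq_single_add_sum_support (σ : Perm G) :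
    termExponent σ = Finsupp.single 1 (Fintype.card G - #σ.support) +
      ∑ i ∈ σ.support, Finsupp.single (σ i * i⁻¹) 1 := by
  rw [termExponent, ← sum_compl_add_sum σ.support]
  congr 1
  rw [sum_congr rfl fun i hi => by rw [notMem_support.mp (mem_compl.mp hi), mul_inv_cancel],
    sum_const, card_compl, Finsupp.smul_single, smul_eq_mul, mul_one]

theorem termExponent_eq_of_isThreeCycle {σ : Perm G} (hσ : σ.IsThreeCycle) {r : G}
    (hr : r ∈ σ.support) :
    termExponent σ = Finsupp.single 1 (Fintype.card G - 3) + Finsupp.single (σ r * r⁻¹) 1 +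
      Finsupp.single (σ (σ r) * (σ r)⁻¹) 1 + Finsupp.single (r * (σ (σ r))⁻¹) 1 := by
  have hnodup := hσ.nodup_iff_mem_support.mpr hr
  simp only [List.nodup_cons, List.mem_cons, not_or] at hnodup
  rw [termExponent_eq_single_add_sum_support, hσ.card_support,
    hσ.support_eq_iff_mem_support.mpr hr, sum_insert (by simp [hnodup.1.1, hnodup.1.2]),
    sum_insert (by simp [hnodup.2.1]), sum_singleton, hσ.apply_apply_apply, add_assoc, add_assoc]

theorem isThreeCycle_threeCycle {b c : G} (hb : b ≠ 1) (hc : c ≠ 1) (hbc : b * c ≠ 1) (r : G) :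
    (threeCycle b c r).IsThreeCycle := by
  have h := nodup_threeCycle hb hc hbc r
  rw [← card_support_eq_three_iff, threeCycle, support_swap_mul_swap h]
  simpa using List.toFinset_card_of_nodup h

theorem termExponent_threeCycle {a b c : G} (ha : a ≠ 1) (hb : b ≠ 1) (hc : c ≠ 1)
    (habc : a * b * c = 1) (r : G) :
    termExponent (threeCycle b c r) = Finsupp.single 1 (Fintype.card G - 3) +
      Finsupp.single a 1 + Finsupp.single b 1 + Finsupp.single c 1 := by
  have hbc_inv : (b * c)⁻¹ = a := (eq_inv_of_mul_eq_one_left (by rw [← mul_assoc, habc])).symm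
  have hbc : b * c ≠ 1 := fun h => ha (by rw [← hbc_inv, h, inv_one])
  have hr : r ∈ (threeCycle b c r).support := by
    simpa [threeCycle_apply_self hb hc hbc, eq_comm (a := r)] using hc
  rw [termExponent_eq_of_isThreeCycle (isThreeCycle_threeCycle hb hc hbc r) hr,
    threeCycle_apply_self hb hc hbc, threeCycle_apply_mul_self hb hc hbc, mul_inv_cancel_right,
    show b * c * r * (c * r)⁻¹ = b by group, show r * (b * c * r)⁻¹ = a by rw [← hbc_inv]; group]
  abel

theorem threeCycle_injective {a b c : G} (ha : a ≠ 1) (hb : b ≠ 1) (hc : c ≠ 1)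
    (habc : a * b * c = 1) (hac : a ≠ c) (hbc : b ≠ c) : Function.Injective (threeCycle b c) := by
  intro r s hrs
  have hbc1 : b * c ≠ 1 := fun h => ha (by simpa [mul_assoc, h] using habc)
  have hfiber : termExponent (threeCycle b c s) c = 1 := by
    simp [termExponent_threeCycle ha hb hc habc, hc.symm, hac, hbc]
  refine eq_of_termExponent_eq_one hfiber ?_ ?_
  · rw [← hrs, threeCycle_apply_self hb hc hbc1, mul_inv_cancel_right]
  · rw [threeCycle_apply_self hb hc hbc1, mul_inv_cancel_right]

theorem isThreeCycle_of_termExponent_eq {a b c : G} (ha : a ≠ 1) (hb : b ≠ 1) (hc : c ≠ 1)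
    (hab : a ≠ b) {σ : Perm G}
    (h : termExponent σ = Finsupp.single 1 (Fintype.card G - 3) + Finsupp.single a 1 +
      Finsupp.single b 1 + Finsupp.single c 1) : σ.IsThreeCycle := by
  have hcard : 3 ≤ Fintype.card G := by
    simpa [ha, hb, hab, eq_comm (a := (1 : G))] using card_le_univ ({1, a, b} : Finset G)
  rw [← card_support_eq_three_iff, card_support_eq_card_sub_termExponent_one, h]
  rw [Finsupp.add_apply, Finsupp.add_apply, Finsupp.add_apply, Finsupp.single_eq_same,
    Finsupp.single_eq_of_ne ha.symm, Finsupp.single_eq_of_ne hb.symm,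
    Finsupp.single_eq_of_ne hc.symm]
  omega

theorem eq_threeCycle_of_termExponent_eq {a b c : G} (hc : c ≠ 1) (habc : a * b * c = 1)
    (hcomm : a * b ≠ b * a) {σ : Perm G} (hσ : σ.IsThreeCycle)
    (h : termExponent σ = Finsupp.single 1 (Fintype.card G - 3) + Finsupp.single a 1 +
      Finsupp.single b 1 + Finsupp.single c 1) : ∃ r, σ = threeCycle b c r := by
  obtain ⟨r, hr⟩ := exists_mul_inv_eq_of_termExponent_ne_zero (σ := σ) (v := c) (by simp [h])
  have hr_mem : r ∈ σ.support :=
    mem_support.mpr fun hfix => hc (by rw [← hr, hfix, mul_inv_cancel])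
  have key := termExponent_eq_of_isThreeCycle hσ hr_mem
  rw [h, hr] at key
  have hpair : Finsupp.single a 1 + Finsupp.single b 1 = Finsupp.single (σ (σ r) * (σ r)⁻¹) 1 +
      Finsupp.single (r * (σ (σ r))⁻¹) 1 := by
    apply add_left_cancel (a := Finsupp.single 1 (Fintype.card G - 3) + Finsupp.single c 1)
    convert key using 1 <;> abel
  rcases (Finsupp.single_add_single_eq_single_add_single one_ne_zero one_ne_zero).mp hpair with
    ⟨hx, hy⟩ | ⟨-, -, hx⟩ | ⟨htwo, -⟩
  · -- the orientation `r ↦ c r ↦ a c r ↦ r` would force `b * a * c = 1 = a * b * c`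
    refine absurd (mul_right_cancel (habc.trans ?_)) hcomm
    rw [hx, hy, ← hr]
    group
  · refine ⟨r, (hσ.eq_swap_mul_swap_iff_mem_support.mpr hr_mem).trans ?_⟩
    rw [hx, ← hr, threeCycle]
    congr 2 <;> group
  · exact absurd htwo two_ne_zero

end GroupDet

open GroupDet in
/-- If `a, b, c ≠ e`, `a * b * c = e`, `a, b, c` pairwise distinct and `a * b ≠ b * a`, then the
coefficient of the monomial `x_e^{n-3} x_a x_b x_c` in `Θ(G)` equals `n = |G|`. -/
theorem coeff_groupDet_distinct_noncomm {G : Type*} [Group G] [Fintype G]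
    (a b c : G) (ha : a ≠ 1) (hb : b ≠ 1) (hc : c ≠ 1) (habc : a * b * c = 1)
    (hab : a ≠ b) (hac : a ≠ c) (hbc : b ≠ c) (hcomm : a * b ≠ b * a) :
    MvPolynomial.coeff
      (Finsupp.single (1 : G) (Fintype.card G - 3) +
        Finsupp.single a 1 + Finsupp.single b 1 + Finsupp.single c 1)
      (groupDet ℂ G) = (Fintype.card G : ℂ) := by
  classical
  set m : G →₀ ℕ := Finsupp.single (1 : G) (Fintype.card G - 3) +
    Finsupp.single a 1 + Finsupp.single b 1 + Finsupp.single c 1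
  have hcycle : ∀ σ : Perm G, termExponent σ = m → σ.IsThreeCycle :=
    fun σ => isThreeCycle_of_termExponent_eq ha hb hc hab
  have hterms : ({σ | termExponent σ = m} : Finset (Perm G)) = univ.image (threeCycle b c) := by
    ext σ
    simp only [mem_filter, mem_univ, true_and, mem_image]
    constructor
    · intro h
      obtain ⟨r, hr⟩ := eq_threeCycle_of_termExponent_eq hc habc hcomm (hcycle σ h) h
      exact ⟨r, hr.symm⟩
    · rintro ⟨r, rfl⟩
      exact termExponent_threeCycle ha hb hc habc r
  rw [coeff_groupDet, sum_congr rfl fun σ hσ => by rw [(hcycle σ (mem_filter.mp hσ).2).sign],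
    hterms, sum_const, card_image_of_injective _ (threeCycle_injective ha hb hc habc hac hbc)]
  simp
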